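/- Every rooted tree whose vertices and edges are labeled by positive integers is isomorphic, as a labeled rooted tree, to the tree T(E) associated to some low-defect expression E. -/

import Mathlib

/-- `CpxW n k` : the positive integer `n` can be written using exactly `k` ones,
with an arbitrary combination of additions and multiplications. -/
inductive CpxW : ℕ → ℕ → Prop
  | one : CpxW 1 1
  | add {a b m n : ℕ} : CpxW a m → CpxW b n → CpxW (a + b) (m + n)
  | mul {a b m n : ℕ} : CpxW a m → CpxW b n → CpxW (a * b) (m + n)

/-- The integer complexity `‖n‖`. -/
noncomputable def cpx (n : ℕ) : ℕ := sInf {k | CpxW n k}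

/-- Low-defect expressions: built from positive integer constants (rule `const`,
positivity recorded in `LDE.WF`), products (rule `mul`, disjointness of the
variables recorded in `LDE.WF`) and `E·x + c` (rule `step`, freshness of `x`
recorded in `LDE.WF`).  Variables are indexed by natural numbers. -/
inductive LDE : Type
  | const (n : ℕ) : LDE
  | mul (E₁ E₂ : LDE) : LDE
  | step (E : LDE) (x : ℕ) (c : ℕ) : LDE

/-- The set of variables used by a low-defect expression. -/
def LDE.vars : LDE → Finset ℕ
  | .const _ => ∅
  | .mul E₁ E₂ => E₁.vars ∪ E₂.vars
  | .step E x _ => insert x E.vars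

/-- Well-formedness of a low-defect expression: constants are positive, the two
factors of a product use disjoint sets of variables, and the variable of
`E·x + c` does not occur in `E`. -/
def LDE.WF : LDE → Prop
  | .const n => 0 < n
  | .mul E₁ E₂ => E₁.WF ∧ E₂.WF ∧ Disjoint E₁.vars E₂.vars
  | .step E x c => E.WF ∧ x ∉ E.vars ∧ 0 < c

/-- The polynomial obtained by evaluating a low-defect expression. -/
noncomputable def LDE.poly : LDE → MvPolynomial ℕ ℤ
  | .const n => MvPolynomial.C (n : ℤ)
  | .mul E₁ E₂ => E₁.poly * E₂.poly
  | .step E x c => E.poly * MvPolynomial.X x + MvPolynomial.C (c : ℤ)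

/-- The complexity `‖E‖` of a low-defect expression. -/
noncomputable def LDE.cpx : LDE → ℕ
  | .const n => _root_.cpx n
  | .mul E₁ E₂ => E₁.cpx + E₂.cpx
  | .step E _ c => E.cpx + _root_.cpx c

/-- Low-defect trees: rooted trees whose vertices and edges are labeled by
natural numbers (positivity of the labels is recorded in `LDT.Pos`); a node
carries its label together with the list of its subtrees, each with the label of
the corresponding edge. -/
inductive LDT : Type
  | node (label : ℕ) (children : List (ℕ × LDT)) : LDT

/-- The label of the root. -/
def LDT.label : LDT → ℕ | .node n _ => n

/-- The children (edge label, subtree) of the root. -/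
def LDT.children : LDT → List (ℕ × LDT) | .node _ cs => cs

mutual
/-- All labels of a low-defect tree are positive. -/
def LDT.Pos : LDT → Prop
  | .node n cs => 0 < n ∧ LDT.PosAux cs

def LDT.PosAux : List (ℕ × LDT) → Prop
  | [] => True
  | c :: cs => 0 < c.1 ∧ c.2.Pos ∧ LDT.PosAux cs
end

/-- Isomorphism of labeled rooted trees: a root-preserving, label-preserving
graph isomorphism; concretely, the root labels agree and the children lists
match up to a permutation, recursively. -/
inductive LDT.Iso : LDT → LDT → Prop
  | node (n : ℕ) (cs₁ cs₂ : List (ℕ × LDT)) (σ : Fin cs₁.length ≃ Fin cs₂.length)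
      (hlab : ∀ i : Fin cs₁.length, (cs₁.get i).1 = (cs₂.get (σ i)).1)
      (hiso : ∀ i : Fin cs₁.length, LDT.Iso (cs₁.get i).2 (cs₂.get (σ i)).2) :
      LDT.Iso (.node n cs₁) (.node n cs₂)

/-- The low-defect tree `T(E)` associated to a low-defect expression `E`. -/
def LDE.tree : LDE → LDT
  | .const n => .node n []
  | .step E _ c => .node 1 [(c, E.tree)]
  | .mul E₁ E₂ => .node (E₁.tree.label * E₂.tree.label) (E₁.tree.children ++ E₂.tree.children)

/-- The subtree of a low-defect tree at a position (a path from the root, given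
by the list of child indices); `none` if there is no such vertex. -/
def LDT.sub? : LDT → List ℕ → Option LDT
  | t, [] => some t
  | t, i :: p =>
    match t.children[i]? with
    | some c => LDT.sub? c.2 p
    | none => none

/-- `p` is a vertex of `t` (vertices are encoded by their positions). -/
def LDT.IsVert (t : LDT) (p : List ℕ) : Prop := (t.sub? p).isSome

/-- The label of the vertex at position `p` (junk value `1` if `p` is not a
vertex). -/
def LDT.labelAt (t : LDT) (p : List ℕ) : ℕ := ((t.sub? p).map LDT.label).getD 1

/-- The list of children at position `p`. -/
def LDT.childrenAt (t : LDT) (p : List ℕ) : List (ℕ × LDT) :=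
  ((t.sub? p).map LDT.children).getD []

/-- The label of the edge joining the non-root vertex at position `q` to its
parent (junk value `1` if there is no such edge). -/
def LDT.edgeLabelAt (t : LDT) (q : List ℕ) : ℕ :=
  (((t.sub? q.dropLast).bind (fun s => s.children[q.getLast?.getD 0]?)).map
    Prod.fst).getD 1

mutual
/-- The list of all positions (vertices) of a low-defect tree. -/
def LDT.positions : LDT → List (List ℕ)
  | .node _ cs => [] :: LDT.positionsAux 0 cs

def LDT.positionsAux : ℕ → List (ℕ × LDT) → List (List ℕ)
  | _, [] => []
  | i, c :: cs => (c.2.positions.map (i :: ·)) ++ LDT.positionsAux (i + 1) cs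
end

/-- The finite set of vertices (positions) of a low-defect tree. -/
def LDT.vertFinset (t : LDT) : Finset (List ℕ) := t.positions.toFinset

/-- The finite set of edges of a low-defect tree, an edge being encoded by the
position of its lower (non-root) endpoint. -/
def LDT.edgeFinset (t : LDT) : Finset (List ℕ) := t.positions.toFinset.erase []

/-- The variable of `E` corresponding to the non-root vertex of `T(E)` at a given
position, under the canonical bijection between variables of `E` and non-root
vertices of `T(E)`. -/
def LDE.varAt : LDE → List ℕ → Option ℕ
  | .const _, _ => none
  | .step E x _, p =>
    match p with
    | 0 :: p' => if p' = [] then some x else E.varAt p'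
    | _ => none
  | .mul E₁ E₂, p =>
    match p with
    | i :: p' =>
      if i < E₁.tree.children.length then E₁.varAt (i :: p')
      else E₂.varAt ((i - E₁.tree.children.length) :: p')
    | [] => none

/-- The position of the non-root vertex of `T(E)` corresponding to a variable of
`E`, under the canonical bijection. -/
def LDE.posOf : LDE → ℕ → Option (List ℕ)
  | .const _, _ => none
  | .step E v _, x => if x = v then some [0] else (E.posOf x).map (0 :: ·)
  | .mul E₁ E₂, x =>
    match E₁.posOf x with
    | some p => some p
    | none => (E₂.posOf x).map (fun p =>
        match p with
        | i :: p' => (i + E₁.tree.children.length) :: p'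
        | [] => [])

/-!
A tree with root label `n` and children `(cᵢ, tᵢ)` is exactly `T(E)` for
`E = n · ∏ᵢ (Eᵢ·xᵢ + cᵢ)` with `T(Eᵢ) = tᵢ`: every factor `Eᵢ·xᵢ + cᵢ` contributes a root of
label `1` and the single edge `(cᵢ, tᵢ)`. Building the `Eᵢ` recursively and drawing the
variables from a counter makes the variables of distinct factors lie in disjoint intervals,
so the expression is well formed and its tree is `T` itself.
-/

theorem LDT.Iso.refl (t : LDT) : t.Iso t := by
  induction t using LDT.rec (motive_2 := fun cs => ∀ p ∈ cs, p.2.Iso p.2)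
    (motive_3 := fun p => p.2.Iso p.2) with
  | node n cs ih => exact .node n cs cs (Equiv.refl _) (fun _ => rfl) fun i => ih _ (List.get_mem _ _)
  | nil => exact (List.not_mem_nil ‹_›).elim
  | cons c cs ihc ihcs =>
    rcases List.mem_cons.1 ‹_› with rfl | hp
    · exact ihc
    · exact ihcs _ hp
  | mk _ _ ih => exact ih

theorem LDT.node_label_children (t : LDT) : .node t.label t.children = t := by
  cases t; rfl

@[simp]
theorem LDE.tree_mul_step (E F : LDE) (x c : ℕ) :
    (E.mul (F.step x c)).tree = .node E.tree.label (E.tree.children ++ [(c, F.tree)]) := by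
  simp [LDE.tree, LDT.label, LDT.children]

def LDE.WFIn (E : LDE) (a b : ℕ) : Prop := a ≤ b ∧ E.WF ∧ E.vars ⊆ Finset.Ico a b

theorem LDE.wfIn_const {n : ℕ} (hn : 0 < n) (a : ℕ) : (LDE.const n).WFIn a a :=
  ⟨le_rfl, hn, by simp [LDE.vars]⟩

theorem LDE.WFIn.mul_step {E F : LDE} {a k m c : ℕ} (hE : E.WFIn a k) (hF : F.WFIn k m)
    (hc : 0 < c) : (E.mul (F.step m c)).WFIn a (m + 1) := by
  obtain ⟨hak, hEwf, hEv⟩ := hE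
  obtain ⟨hkm, hFwf, hFv⟩ := hF
  have hm : m ∉ F.vars := fun h => by simpa using hFv h
  have hdisj : Disjoint E.vars (F.step m c).vars := by
    refine Finset.disjoint_left.2 fun x hxE hxF => ?_
    have hx := Finset.mem_Ico.1 (hEv hxE)
    rcases Finset.mem_insert.1 hxF with rfl | hxF
    · omega
    · have := Finset.mem_Ico.1 (hFv hxF); omega
  refine ⟨by omega, ⟨hEwf, ⟨hFwf, hm, hc⟩, hdisj⟩, fun x hx => ?_⟩
  simp only [LDE.vars, Finset.mem_union, Finset.mem_insert] at hx
  rw [Finset.mem_Ico]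
  rcases hx with hx | rfl | hx
  · have := Finset.mem_Ico.1 (hEv hx); omega
  · omega
  · have := Finset.mem_Ico.1 (hFv hx); omega

mutual
/-- An expression for `t` whose variables are `k, k + 1, …`, paired with the first variable
it leaves unused. -/
def LDT.toLDE : LDT → ℕ → LDE × ℕ
  | .node n cs, k => LDE.mulChildren (.const n) cs k

def LDE.mulChildren : LDE → List (ℕ × LDT) → ℕ → LDE × ℕ
  | E, [], k => (E, k)
  | E, (c, t) :: cs, k =>
    let r := LDT.toLDE t k
    LDE.mulChildren (E.mul (r.1.step r.2 c)) cs (r.2 + 1)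
end

mutual
theorem LDT.tree_toLDE (t : LDT) (k : ℕ) : (t.toLDE k).1.tree = t := by
  cases t with
  | node n cs =>
    simpa [LDT.toLDE, LDE.tree, LDT.label, LDT.children] using LDE.tree_mulChildren (.const n) cs k

theorem LDE.tree_mulChildren (E : LDE) (cs : List (ℕ × LDT)) (k : ℕ) :
    (E.mulChildren cs k).1.tree = .node E.tree.label (E.tree.children ++ cs) := by
  cases cs with
  | nil => simpa [LDE.mulChildren] using (LDT.node_label_children E.tree).symm
  | cons p cs =>
    obtain ⟨c, t⟩ := p
    rw [LDE.mulChildren, LDE.tree_mulChildren]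
    simp [LDT.tree_toLDE, LDT.label, LDT.children]
end

mutual
theorem LDT.wfIn_toLDE {t : LDT} (ht : t.Pos) (k : ℕ) : (t.toLDE k).1.WFIn k (t.toLDE k).2 := by
  cases t with
  | node n cs => exact LDE.WFIn.mulChildren (LDE.wfIn_const ht.1 k) ht.2

theorem LDE.WFIn.mulChildren {E : LDE} {a k : ℕ} {cs : List (ℕ × LDT)} (hE : E.WFIn a k)
    (hcs : LDT.PosAux cs) : (E.mulChildren cs k).1.WFIn a (E.mulChildren cs k).2 := by
  cases cs with
  | nil => exact hE
  | cons p cs =>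
    obtain ⟨c, t⟩ := p
    obtain ⟨hc, ht, hcs⟩ := hcs
    rw [LDE.mulChildren]
    exact (hE.mul_step (LDT.wfIn_toLDE ht k) hc).mulChildren hcs
end

/-- Every rooted tree with vertices and edges labeled by
positive integers is isomorphic, as a labeled rooted tree, to the tree of some
low-defect expression. -/
theorem every_tree_from_expression (T : LDT) (hT : T.Pos) :
    ∃ E : LDE, E.WF ∧ LDT.Iso E.tree T := by
  refine ⟨(T.toLDE 0).1, (LDT.wfIn_toLDE hT 0).2.1, ?_⟩
  rw [LDT.tree_toLDE]
  exact LDT.Iso.refl T
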